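/- Let ν > 0, p ≥ 2 and 1/p + 1/q = 1. Suppose there are functions ḡ ∈ L^p_ν and ĝ ∈ L^p_ν ∩ L^∞([0,∞)) such that for all t, x ∈ [0,∞) and u, v ∈ ℝ: ‖g(t,x,u)‖_H ≤ |ḡ(x)| and ‖g(t,x,u) − g(t,x,v)‖_H ≤ |ĝ(x)| |u − v|. Then for every t ≥ 0, all measurable f₁, f₂ ∈ L^p_ν and every x ∈ [0,∞), |F(t,f₁)(x) − F(t,f₂)(x)| ≤ (p/(νq))^{1/q} ‖ĝ‖_{L^∞} ‖f₁ − f₂‖_{ν,p} |ḡ(x)| + (p/(νq))^{1/q} ‖ḡ‖_{ν,p} |ĝ(x)| |f₁(x) − f₂(x)|. -/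

import Mathlib

/-!
Split `F(t,f₁)(x) - F(t,f₂)(x)` as
`⟪g(t,x,f₁x) - g(t,x,f₂x), ∫₀ˣ g(f₁)⟫ + ⟪g(t,x,f₂x), ∫₀ˣ (g(f₁) - g(f₂))⟫`; the two integrands
are bounded pointwise by `|ḡ|` and `‖ĝ‖_∞ |f₁ - f₂|`. Every `h ∈ L^p_ν` is integrable on
`(0,∞)` by Hölder applied to `|h| = |h| e^{νy/p} · e^{-νy/p}`, and since
`‖e^{-ν·/p}‖_{L^q}^q = p/(νq)` this gives `∫₀^∞ |h| ≤ (p/(νq))^{1/q} ‖h‖_{ν,p}`.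
-/

open MeasureTheory Set Real

/-- The HJMM drift: `F(t,f)(x) = ⟨ g(t,x,f(x)), ∫_0^x g(t,y,f(y)) dy ⟩_H`. -/
noncomputable def hjmDrift {H : Type*} [NormedAddCommGroup H] [InnerProductSpace ℝ H]
    (g : ℝ → ℝ → ℝ → H) (t : ℝ) (f : ℝ → ℝ) (x : ℝ) : ℝ :=
  @inner ℝ H _ (g t x (f x)) (∫ y in Ioc (0 : ℝ) x, g t y (f y))

section WeightedLp

variable {ν p : ℝ}

lemma norm_mul_exp_div_rpow (hp : p ≠ 0) (a y : ℝ) :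
    ‖a * exp (ν * y / p)‖ ^ p = |a| ^ p * exp (ν * y) := by
  rw [Real.norm_eq_abs, abs_mul, abs_of_pos (exp_pos _), mul_rpow (abs_nonneg _) (exp_pos _).le,
    ← exp_mul, div_mul_cancel₀ _ hp]

lemma memLp_mul_exp_iff {μ : Measure ℝ} {f : ℝ → ℝ} (hp : 0 < p)
    (hf : AEStronglyMeasurable f μ) :
    MemLp (fun y => f y * exp (ν * y / p)) (ENNReal.ofReal p) μ ↔
      Integrable (fun y => |f y| ^ p * exp (ν * y)) μ := by
  have hfw : AEStronglyMeasurable (fun y => f y * exp (ν * y / p)) μ := hf.mul (by fun_prop)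
  rw [← integrable_norm_rpow_iff hfw (by simpa using hp) ENNReal.ofReal_ne_top,
    ENNReal.toReal_ofReal hp.le]
  simp_rw [norm_mul_exp_div_rpow hp.ne']

lemma integrable_rpow_abs_sub_mul_exp {μ : Measure ℝ} {f₁ f₂ : ℝ → ℝ} (hp : 0 < p)
    (hf₁m : AEStronglyMeasurable f₁ μ) (hf₂m : AEStronglyMeasurable f₂ μ)
    (hf₁ : Integrable (fun y => |f₁ y| ^ p * exp (ν * y)) μ)
    (hf₂ : Integrable (fun y => |f₂ y| ^ p * exp (ν * y)) μ) :
    Integrable (fun y => |f₁ y - f₂ y| ^ p * exp (ν * y)) μ := by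
  refine (memLp_mul_exp_iff hp (f := fun y => f₁ y - f₂ y) (hf₁m.sub hf₂m)).1 ?_
  simp_rw [sub_mul]
  exact ((memLp_mul_exp_iff hp hf₁m).2 hf₁).sub ((memLp_mul_exp_iff hp hf₂m).2 hf₂)

lemma integral_exp_neg_mul_rpow_Ioi {c r : ℝ} (hc : 0 < c) (hr : 0 < r) :
    ∫ y in Ioi 0, exp (-c * y) ^ r = (c * r)⁻¹ := by
  have h : ∀ y, exp (-c * y) ^ r = exp (-(c * r) * y) := fun y => by
    rw [← exp_mul]; ring_nf
  simp_rw [h]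
  rw [integral_exp_mul_Ioi (neg_neg_of_pos (mul_pos hc hr))]
  simp

lemma memLp_exp_neg_mul_Ioi {c r : ℝ} (hc : 0 < c) (hr : 0 < r) :
    MemLp (fun y => exp (-c * y)) (ENNReal.ofReal r) (volume.restrict (Ioi 0)) := by
  rw [← integrable_norm_rpow_iff (by fun_prop) (by simpa using hr) ENNReal.ofReal_ne_top,
    ENNReal.toReal_ofReal hr.le]
  have h : ∀ y, ‖exp (-c * y)‖ ^ r = exp (-(c * r) * y) := fun y => by
    rw [Real.norm_of_nonneg (exp_pos _).le, ← exp_mul]; ring_nf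
  simp_rw [h]
  exact exp_neg_integrableOn_Ioi 0 (mul_pos hc hr)

lemma norm_mul_exp_div_mul_exp_neg (a y : ℝ) :
    ‖a * exp (ν * y / p)‖ * ‖exp (-(ν / p) * y)‖ = |a| := by
  rw [← norm_mul, mul_assoc, ← exp_add, neg_mul, ← mul_div_right_comm, add_neg_cancel, exp_zero,
    mul_one, Real.norm_eq_abs]

variable {f : ℝ → ℝ} (hν : 0 < ν) (hfm : AEStronglyMeasurable f (volume.restrict (Ioi 0)))
  (hf : IntegrableOn (fun y => |f y| ^ p * exp (ν * y)) (Ioi 0))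
include hν hfm hf

lemma integrableOn_abs_of_weighted (hp : 1 < p) : IntegrableOn (fun y => |f y|) (Ioi 0) := by
  have hpq := Real.HolderConjugate.conjExponent hp
  have := hpq.ennrealOfReal
  have hw := ((memLp_mul_exp_iff hpq.pos hfm).2 hf).integrable_mul
    (memLp_exp_neg_mul_Ioi (div_pos hν hpq.pos) hpq.symm.pos)
  refine hw.norm.congr (ae_of_all _ fun y => ?_)
  exact (norm_mul _ _).trans (norm_mul_exp_div_mul_exp_neg _ _)

lemma integral_abs_le_of_weighted {q : ℝ} (hpq : p.HolderConjugate q) :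
    ∫ y in Ioi 0, |f y| ≤
      (p / (ν * q)) ^ (1 / q) * (∫ y in Ioi 0, |f y| ^ p * exp (ν * y)) ^ (1 / p) := by
  have holder := integral_mul_norm_le_Lp_mul_Lq hpq ((memLp_mul_exp_iff hpq.pos hfm).2 hf)
    (memLp_exp_neg_mul_Ioi (div_pos hν hpq.pos) hpq.symm.pos)
  simp_rw [norm_mul_exp_div_mul_exp_neg, norm_mul_exp_div_rpow hpq.ne_zero,
    Real.norm_of_nonneg (exp_pos _).le,
    integral_exp_neg_mul_rpow_Ioi (div_pos hν hpq.pos) hpq.symm.pos] at holder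
  rw [mul_comm]
  convert holder using 3
  field_simp

lemma norm_setIntegral_Ioc_le_of_weighted {H : Type*} [NormedAddCommGroup H] [NormedSpace ℝ H]
    {q K x : ℝ} (hpq : p.HolderConjugate q) (hK : 0 ≤ K) {φ : ℝ → H}
    (hφ : ∀ᵐ y ∂volume.restrict (Ioc 0 x), ‖φ y‖ ≤ K * |f y|) :
    ‖∫ y in Ioc 0 x, φ y‖ ≤
      K * ((p / (ν * q)) ^ (1 / q) * (∫ y in Ioi 0, |f y| ^ p * exp (ν * y)) ^ (1 / p)) := by
  have hint := integrableOn_abs_of_weighted hν hfm hf hpq.lt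
  calc ‖∫ y in Ioc 0 x, φ y‖
      ≤ ∫ y in Ioc 0 x, K * |f y| :=
        norm_integral_le_of_norm_le ((hint.mono_set Ioc_subset_Ioi_self).const_mul K) hφ
    _ = K * ∫ y in Ioc 0 x, |f y| := integral_const_mul K _
    _ ≤ K * ∫ y in Ioi 0, |f y| := mul_le_mul_of_nonneg_left
        (setIntegral_mono_set hint (ae_of_all _ fun y => abs_nonneg _)
          Ioc_subset_Ioi_self.eventuallyLE) hK
    _ ≤ _ := mul_le_mul_of_nonneg_left (integral_abs_le_of_weighted hν hfm hf hpq) hK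

end WeightedLp

lemma ae_abs_le_eLpNormEssSup_toReal {α : Type*} [MeasurableSpace α] {μ : Measure α}
    {f : α → ℝ} (hf : eLpNormEssSup f μ ≠ ⊤) :
    ∀ᵐ y ∂μ, |f y| ≤ (eLpNormEssSup f μ).toReal := by
  filter_upwards [ae_le_eLpNormEssSup (f := f) (μ := μ)] with y hy
  simpa using ENNReal.toReal_mono hf hy

lemma abs_inner_sub_inner_le {H : Type*} [NormedAddCommGroup H] [InnerProductSpace ℝ H]
    (a₁ a₂ b₁ b₂ : H) :
    |inner ℝ a₁ b₁ - inner ℝ a₂ b₂| ≤ ‖a₁ - a₂‖ * ‖b₁‖ + ‖a₂‖ * ‖b₁ - b₂‖ := by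
  have h : inner ℝ a₁ b₁ - inner ℝ a₂ b₂ = inner ℝ (a₁ - a₂) b₁ + inner ℝ a₂ (b₁ - b₂) := by
    rw [inner_sub_left, inner_sub_right]; ring
  rw [h]
  exact (abs_add_le _ _).trans
    (add_le_add (abs_real_inner_le_norm _ _) (abs_real_inner_le_norm _ _))

theorem stmt_8_general {H : Type*} [NormedAddCommGroup H] [InnerProductSpace ℝ H]
    (ν p q : ℝ) (hν : 0 < ν) (hp : 2 ≤ p) (hpq : 1 / p + 1 / q = 1)
    (g : ℝ → ℝ → ℝ → H)
    (hgm : StronglyMeasurable fun z : ℝ × ℝ × ℝ => g z.1 z.2.1 z.2.2)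
    (gbar ghat : ℝ → ℝ) (hgbarm : Measurable gbar)
    (hgbar : IntegrableOn (fun x => |gbar x| ^ p * Real.exp (ν * x)) (Ioi 0))
    (hghatInf : eLpNormEssSup ghat (volume.restrict (Ioi 0)) ≠ ⊤)
    (hb : ∀ t x u : ℝ, 0 ≤ t → 0 ≤ x → ‖g t x u‖ ≤ |gbar x|)
    (hlip : ∀ t x u v : ℝ, 0 ≤ t → 0 ≤ x → ‖g t x u - g t x v‖ ≤ |ghat x| * |u - v|)
    (t : ℝ) (ht : 0 ≤ t) (f₁ f₂ : ℝ → ℝ) (hf₁m : Measurable f₁) (hf₂m : Measurable f₂)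
    (hf₁ : IntegrableOn (fun x => |f₁ x| ^ p * Real.exp (ν * x)) (Ioi 0))
    (hf₂ : IntegrableOn (fun x => |f₂ x| ^ p * Real.exp (ν * x)) (Ioi 0)) :
    ∀ x : ℝ, 0 ≤ x →
      |hjmDrift g t f₁ x - hjmDrift g t f₂ x| ≤
        (p / (ν * q)) ^ (1 / q) *
            (eLpNormEssSup ghat (volume.restrict (Ioi 0))).toReal *
            (∫ y in Ioi (0 : ℝ), |f₁ y - f₂ y| ^ p * Real.exp (ν * y)) ^ (1 / p) *
            |gbar x| +
          (p / (ν * q)) ^ (1 / q) *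
            (∫ y in Ioi (0 : ℝ), |gbar y| ^ p * Real.exp (ν * y)) ^ (1 / p) *
            |ghat x| * |f₁ x - f₂ x| := by
  intro x hx
  have hpq' : p.HolderConjugate q :=
    Real.holderConjugate_iff.mpr ⟨by linarith, by simpa only [one_div] using hpq⟩
  have hIoc : ∀ᵐ y ∂volume.restrict (Ioc 0 x), 0 ≤ y :=
    ae_restrict_of_forall_mem measurableSet_Ioc fun y hy => hy.1.le
  have hgf_int (f : ℝ → ℝ) (hf : Measurable f) :
      IntegrableOn (fun y => g t y (f y)) (Ioc 0 x) :=
    ((integrableOn_abs_of_weighted hν hgbarm.aestronglyMeasurable hgbar hpq'.lt).mono_set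
      Ioc_subset_Ioi_self).mono'
      (hgm.comp_measurable (measurable_const.prodMk (measurable_id.prodMk hf))).aestronglyMeasurable
      (hIoc.mono fun y hy => hb t y _ ht hy)
  have hI₁ := norm_setIntegral_Ioc_le_of_weighted hν hgbarm.aestronglyMeasurable hgbar hpq'
    zero_le_one (hIoc.mono fun y hy => (hb t y (f₁ y) ht hy).trans_eq (one_mul _).symm)
  have hI₁₂ := norm_setIntegral_Ioc_le_of_weighted (f := fun y => f₁ y - f₂ y)
    (φ := fun y => g t y (f₁ y) - g t y (f₂ y)) hν (hf₁m.sub hf₂m).aestronglyMeasurable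
    (integrable_rpow_abs_sub_mul_exp hpq'.pos hf₁m.aestronglyMeasurable
      hf₂m.aestronglyMeasurable hf₁ hf₂) hpq' ENNReal.toReal_nonneg <| by
      filter_upwards [hIoc, ae_restrict_of_ae_restrict_of_subset Ioc_subset_Ioi_self
        (ae_abs_le_eLpNormEssSup_toReal hghatInf)] with y hy hghat_y
      exact (hlip t y _ _ ht hy).trans (by gcongr)
  rw [integral_sub (hgf_int f₁ hf₁m) (hgf_int f₂ hf₂m)] at hI₁₂
  refine ((abs_inner_sub_inner_le _ _ _ _).trans (add_le_add
    (mul_le_mul (hlip t x _ _ ht hx) hI₁ (norm_nonneg _) (by positivity))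
    (mul_le_mul (hb t x _ ht hx) hI₁₂ (norm_nonneg _) (abs_nonneg _)))).trans_eq ?_
  ring

/-- Under `‖g(t,x,u)‖_H ≤ |ḡ(x)|` and
`‖g(t,x,u) − g(t,x,v)‖_H ≤ |ĝ(x)| |u − v|` with `ḡ ∈ L^p_ν` and `ĝ ∈ L^p_ν ∩ L^∞`,
for every `t ≥ 0`, measurable `f₁, f₂ ∈ L^p_ν` and `x ≥ 0`,
`|F(t,f₁)(x) − F(t,f₂)(x)| ≤ (p/(νq))^{1/q} ‖ĝ‖_{L^∞} ‖f₁ − f₂‖_{ν,p} |ḡ(x)|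
 + (p/(νq))^{1/q} ‖ḡ‖_{ν,p} |ĝ(x)| |f₁(x) − f₂(x)|`. -/
theorem stmt_8 {H : Type*} [NormedAddCommGroup H] [InnerProductSpace ℝ H]
    [CompleteSpace H] [TopologicalSpace.SeparableSpace H]
    (ν p q : ℝ) (hν : 0 < ν) (hp : 2 ≤ p) (hpq : 1 / p + 1 / q = 1)
    (g : ℝ → ℝ → ℝ → H)
    (hgm : StronglyMeasurable fun z : ℝ × ℝ × ℝ => g z.1 z.2.1 z.2.2)
    (gbar ghat : ℝ → ℝ) (hgbarm : Measurable gbar) (hghatm : Measurable ghat)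
    (hgbar : IntegrableOn (fun x => |gbar x| ^ p * Real.exp (ν * x)) (Ioi 0))
    (hghat : IntegrableOn (fun x => |ghat x| ^ p * Real.exp (ν * x)) (Ioi 0))
    (hghatInf : eLpNormEssSup ghat (volume.restrict (Ioi 0)) ≠ ⊤)
    (hb : ∀ t x u : ℝ, 0 ≤ t → 0 ≤ x → ‖g t x u‖ ≤ |gbar x|)
    (hlip : ∀ t x u v : ℝ, 0 ≤ t → 0 ≤ x → ‖g t x u - g t x v‖ ≤ |ghat x| * |u - v|)
    (t : ℝ) (ht : 0 ≤ t) (f₁ f₂ : ℝ → ℝ) (hf₁m : Measurable f₁) (hf₂m : Measurable f₂)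
    (hf₁ : IntegrableOn (fun x => |f₁ x| ^ p * Real.exp (ν * x)) (Ioi 0))
    (hf₂ : IntegrableOn (fun x => |f₂ x| ^ p * Real.exp (ν * x)) (Ioi 0)) :
    ∀ x : ℝ, 0 ≤ x →
      |hjmDrift g t f₁ x - hjmDrift g t f₂ x| ≤
        (p / (ν * q)) ^ (1 / q) *
            (eLpNormEssSup ghat (volume.restrict (Ioi 0))).toReal *
            (∫ y in Ioi (0 : ℝ), |f₁ y - f₂ y| ^ p * Real.exp (ν * y)) ^ (1 / p) *
            |gbar x| +
          (p / (ν * q)) ^ (1 / q) *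
            (∫ y in Ioi (0 : ℝ), |gbar y| ^ p * Real.exp (ν * y)) ^ (1 / p) *
            |ghat x| * |f₁ x - f₂ x| :=
  stmt_8_general ν p q hν hp hpq g hgm gbar ghat hgbarm hgbar hghatInf hb hlip t ht f₁ f₂ hf₁m hf₂m
    hf₁ hf₂
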